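/- arXiv:2409.06905 — 5 statements merged into one kernel-verified Lean document; each statement's English description precedes it below -/
import Mathlib

section
/- For every δ ∈ (0, ∞) and every nonzero integer n, the quantity 𝔏_δ(n) := δ^{−1}(n·coth(δn) − δ^{−1}) satisfies 0 < 𝔏_δ(n) < min(n²/3, |n|/δ). -/
open Real

/-- `coth x = (e^x + e^{-x})/(e^x - e^{-x}) = cosh x / sinh x` (for `x ≠ 0`). -/
noncomputable def myCoth (x : ℝ) : ℝ := Real.cosh x / Real.sinh x

/-- The scaled ILW dispersion multiplier `𝔏_δ(n) = δ⁻¹ (n · coth(δn) − δ⁻¹)`. -/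
noncomputable def Lmul (δ : ℝ) (n : ℤ) : ℝ := δ⁻¹ * ((n : ℝ) * myCoth (δ * n) - δ⁻¹)

/-!
With `t = δ|n| > 0` one has `𝔏_δ(n) = (t coth t - 1) / δ²`, so the claim is the three
inequalities `1 < t coth t < 1 + min(t²/3, t)`. Multiplied by `sinh t`, each says that a
function vanishing at `0` is positive on `(0, ∞)`, which follows from the positivity of its
derivative: `(t cosh t - sinh t)' = t sinh t`, `(t² sinh t - 3 (t cosh t - sinh t))'` is
`t (t cosh t - sinh t)`, and `(t sinh t - (t cosh t - sinh t))' = sinh t + t e^{-t}`.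
-/

lemma pos_of_hasDerivAt_of_map_zero {f f' : ℝ → ℝ} (hf : ∀ x, HasDerivAt f (f' x) x)
    (h₀ : f 0 = 0) (hf' : ∀ x, 0 < x → 0 < f' x) {t : ℝ} (ht : 0 < t) : 0 < f t := by
  have hmono : StrictMonoOn f (Set.Ici 0) :=
    strictMonoOn_of_hasDerivWithinAt_pos (convex_Ici 0)
      (fun x _ ↦ (hf x).continuousAt.continuousWithinAt)
      (fun x _ ↦ (hf x).hasDerivWithinAt)
      (fun x hx ↦ hf' x (by rwa [interior_Ici] at hx))
  simpa [h₀] using hmono Set.self_mem_Ici ht.le ht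

lemma sinh_lt_mul_cosh {t : ℝ} (ht : 0 < t) : sinh t < t * cosh t := by
  have hderiv (x : ℝ) : HasDerivAt (fun x ↦ x * cosh x - sinh x) (x * sinh x) x :=
    (((hasDerivAt_id x).mul (hasDerivAt_cosh x)).sub (hasDerivAt_sinh x)).congr_deriv
      (by simp)
  have := pos_of_hasDerivAt_of_map_zero hderiv (by simp)
    (fun x hx ↦ mul_pos hx (sinh_pos_iff.2 hx)) ht
  linarith

lemma three_mul_sub_lt_sq_mul_sinh {t : ℝ} (ht : 0 < t) :
    3 * (t * cosh t - sinh t) < t ^ 2 * sinh t := by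
  have hderiv (x : ℝ) : HasDerivAt (fun x ↦ x ^ 2 * sinh x - 3 * (x * cosh x - sinh x))
      (x * (x * cosh x - sinh x)) x :=
    (((hasDerivAt_pow 2 x).mul (hasDerivAt_sinh x)).sub
      ((((hasDerivAt_id x).mul (hasDerivAt_cosh x)).sub (hasDerivAt_sinh x)).const_mul 3)
      ).congr_deriv (by simp only [id, Nat.cast_ofNat]; ring)
  have := pos_of_hasDerivAt_of_map_zero hderiv (by simp)
    (fun x hx ↦ mul_pos hx (sub_pos.2 (sinh_lt_mul_cosh hx))) ht
  linarith

lemma mul_cosh_sub_lt_mul_sinh {t : ℝ} (ht : 0 < t) :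
    t * cosh t - sinh t < t * sinh t := by
  have hderiv (x : ℝ) : HasDerivAt (fun x ↦ x * sinh x - (x * cosh x - sinh x))
      (sinh x + x * exp (-x)) x :=
    (((hasDerivAt_id x).mul (hasDerivAt_sinh x)).sub
      (((hasDerivAt_id x).mul (hasDerivAt_cosh x)).sub (hasDerivAt_sinh x))).congr_deriv
      (by rw [← cosh_sub_sinh]; simp only [id, one_mul]; ring)
  have := pos_of_hasDerivAt_of_map_zero hderiv (by simp)
    (fun x hx ↦ add_pos (sinh_pos_iff.2 hx) (mul_pos hx (exp_pos _))) ht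
  linarith

lemma myCoth_neg (x : ℝ) : myCoth (-x) = -myCoth x := by
  simp [myCoth, div_neg]

lemma Lmul_eq (δ : ℝ) (n : ℤ) (hδ : δ ≠ 0) :
    Lmul δ n = (δ * |(n : ℝ)| * myCoth (δ * |(n : ℝ)|) - 1) / δ ^ 2 := by
  have hsymm : (n : ℝ) * myCoth (δ * n) = |(n : ℝ)| * myCoth (δ * |(n : ℝ)|) := by
    rcases abs_choice (n : ℝ) with h | h <;> rw [h]
    rw [mul_neg, myCoth_neg, neg_mul_neg]
  rw [Lmul, hsymm]
  field_simp

/-- For every `δ ∈ (0,∞)` and every nonzero integer `n`,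
`0 < 𝔏_δ(n) < min(n²/3, |n|/δ)`. -/
theorem stmt2 (δ : ℝ) (hδ : 0 < δ) (n : ℤ) (hn : n ≠ 0) :
    0 < Lmul δ n ∧ Lmul δ n < min ((n : ℝ) ^ 2 / 3) (|(n : ℝ)| / δ) := by
  set t := δ * |(n : ℝ)| with ht_def
  have ht : 0 < t := mul_pos hδ (abs_pos.2 (Int.cast_ne_zero.2 hn))
  have hsinh : 0 < sinh t := sinh_pos_iff.2 ht
  have hδ2 : 0 < δ ^ 2 := by positivity
  have hcoth : t * myCoth t = (t * cosh t) / sinh t := by rw [myCoth, mul_div_assoc]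
  rw [Lmul_eq δ n hδ.ne', hcoth, lt_min_iff]
  refine ⟨div_pos ?_ hδ2, ?_, ?_⟩
  · rw [sub_pos, one_lt_div hsinh]
    exact sinh_lt_mul_cosh ht
  · rw [show (n : ℝ) ^ 2 / 3 = t ^ 2 / 3 / δ ^ 2 by rw [ht_def, ← sq_abs (n : ℝ)]; field_simp,
      div_lt_div_iff_of_pos_right hδ2, sub_lt_iff_lt_add, div_lt_iff₀ hsinh]
    linarith [three_mul_sub_lt_sq_mul_sinh ht]
  · rw [show |(n : ℝ)| / δ = t / δ ^ 2 by rw [ht_def]; field_simp,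
      div_lt_div_iff_of_pos_right hδ2, sub_lt_iff_lt_add, div_lt_iff₀ hsinh]
    linarith [mul_cosh_sub_lt_mul_sinh ht]
end

section
/- For every δ ∈ (0, ∞) and nonzero integer n, define 𝔥(δ, n) := 6δ²n² Σ_{k=1}^∞ 1/(k²π²(k²π² + δ²n²)). Then n²·𝔥(δ,n) = n² − 3𝔏_δ(n) with 𝔏_δ(n) as in the Mittag-Leffler representation, 𝔥(δ,n) ∈ (0, 1], the series Σ_{n∈ℤ∖{0}} 𝔥(δ,n)² diverges, and 𝔥(δ,n) → 0 as δ → 0 for each fixed n. -/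
open Real Filter Topology

/-!
Writing `λₖ = k²π²` and `c = δ²n²`, the partial fractions
`1/(λₖ(λₖ + c)) = (1/λₖ - 1/(λₖ + c))/c` and Basel's `Σ 1/λₖ = 1/6` give
`𝔥 = 1 - 6 Σ 1/(λₖ + c)`. Hence `𝔥` is positive, at most `1`, and nondecreasing in `c = δ²n²`,
so `𝔥(δ,n)² ≥ 𝔥(δ,1)² > 0` for all `n ≠ 0` and the series over `n` diverges. As `δ → 0`,
`0 ≤ 𝔥 ≤ 6c Σ 1/λₖ² → 0`.
-/

/-- `𝔥(δ, n) := 6δ²n² Σ_{k=1}^∞ 1/(k²π²(k²π² + δ²n²))`. -/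
noncomputable def hDev (δ : ℝ) (n : ℤ) : ℝ :=
  6 * δ ^ 2 * (n : ℝ) ^ 2 *
    ∑' k : ℕ, 1 / (((k : ℝ) + 1) ^ 2 * π ^ 2 * (((k : ℝ) + 1) ^ 2 * π ^ 2 + δ ^ 2 * (n : ℝ) ^ 2))

/-- The paper's `λₖ = k²π²`, with the index shifted to start at `k = 0`. -/
noncomputable def eigenval (k : ℕ) : ℝ := ((k : ℝ) + 1) ^ 2 * π ^ 2

/-- `𝔥` as a function of `c = δ²n²`. -/
noncomputable def hOf (c : ℝ) : ℝ := 6 * c * ∑' k : ℕ, 1 / (eigenval k * (eigenval k + c))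

lemma eigenval_pos (k : ℕ) : 0 < eigenval k := by
  unfold eigenval; positivity

lemma one_le_eigenval (k : ℕ) : 1 ≤ eigenval k := by
  have hk : (1 : ℝ) ≤ ((k : ℝ) + 1) ^ 2 := one_le_pow₀ (by linarith [k.cast_nonneg (α := ℝ)])
  unfold eigenval
  nlinarith [pi_gt_three]

lemma hasSum_one_div_eigenval : HasSum (fun k => 1 / eigenval k) (1 / 6) := by
  have h := ((hasSum_nat_add_iff' 1).mpr hasSum_zeta_two).div_const (π ^ 2)
  have hπ : π ^ 2 / 6 / π ^ 2 = 1 / 6 := by field_simp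
  simpa [eigenval, hπ, div_eq_inv_mul, mul_comm] using h

lemma summable_one_div_eigenval_add {c : ℝ} (hc : 0 ≤ c) :
    Summable fun k => 1 / (eigenval k + c) :=
  hasSum_one_div_eigenval.summable.of_nonneg_of_le
    (fun k => by have := eigenval_pos k; positivity)
    (fun k => one_div_le_one_div_of_le (eigenval_pos k) (by linarith))

lemma summable_one_div_eigenval_mul {c : ℝ} (hc : 0 ≤ c) :
    Summable fun k => 1 / (eigenval k * (eigenval k + c)) :=
  hasSum_one_div_eigenval.summable.of_nonneg_of_le
    (fun k => by have := eigenval_pos k; positivity)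
    (fun k => one_div_le_one_div_of_le (eigenval_pos k)
      (by nlinarith [eigenval_pos k, one_le_eigenval k]))

lemma hDev_eq_hOf (δ : ℝ) (n : ℤ) : hDev δ n = hOf (δ ^ 2 * (n : ℝ) ^ 2) := by
  unfold hDev hOf eigenval
  ring

lemma hOf_eq_one_sub {c : ℝ} (hc : 0 ≤ c) :
    hOf c = 1 - 6 * ∑' k, 1 / (eigenval k + c) := by
  rcases hc.eq_or_lt with rfl | hc
  · simp only [hOf, mul_zero, zero_mul, add_zero, hasSum_one_div_eigenval.tsum_eq]
    norm_num
  have hsplit : ∀ k, 1 / (eigenval k * (eigenval k + c)) =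
      (1 / eigenval k - 1 / (eigenval k + c)) / c := fun k => by
    have := eigenval_pos k
    field_simp
    ring
  rw [hOf, tsum_congr hsplit, tsum_div_const,
    hasSum_one_div_eigenval.summable.tsum_sub (summable_one_div_eigenval_add hc.le),
    hasSum_one_div_eigenval.tsum_eq]
  field_simp

lemma hOf_pos {c : ℝ} (hc : 0 < c) : 0 < hOf c := by
  have hT : 0 < ∑' k, 1 / (eigenval k * (eigenval k + c)) :=
    (summable_one_div_eigenval_mul hc.le).tsum_pos
      (fun k => by have := eigenval_pos k; positivity) 0
      (by have := eigenval_pos 0; positivity)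
  unfold hOf
  positivity

lemma hOf_le_one {c : ℝ} (hc : 0 ≤ c) : hOf c ≤ 1 := by
  have hS : 0 ≤ ∑' k, 1 / (eigenval k + c) :=
    tsum_nonneg fun k => by have := eigenval_pos k; positivity
  rw [hOf_eq_one_sub hc]
  linarith

lemma hOf_monotoneOn : MonotoneOn hOf (Set.Ici 0) := by
  intro c (hc : 0 ≤ c) d (hd : 0 ≤ d) hcd
  have hS : ∑' k, 1 / (eigenval k + d) ≤ ∑' k, 1 / (eigenval k + c) :=
    (summable_one_div_eigenval_add hd).tsum_le_tsum
      (fun k => one_div_le_one_div_of_le (by linarith [eigenval_pos k]) (by linarith))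
      (summable_one_div_eigenval_add hc)
  rw [hOf_eq_one_sub hc, hOf_eq_one_sub hd]
  linarith

lemma hOf_le_mul {c : ℝ} (hc : 0 ≤ c) :
    hOf c ≤ 6 * c * ∑' k, 1 / (eigenval k * eigenval k) := by
  have hT : ∑' k, 1 / (eigenval k * (eigenval k + c)) ≤ ∑' k, 1 / (eigenval k * eigenval k) :=
    (summable_one_div_eigenval_mul hc).tsum_le_tsum
      (fun k => one_div_le_one_div_of_le (by have := eigenval_pos k; positivity)
        (by nlinarith [eigenval_pos k]))
      (by simpa using summable_one_div_eigenval_mul le_rfl)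
  exact mul_le_mul_of_nonneg_left hT (by positivity)

lemma tendsto_hOf_nhdsGE_zero : Tendsto hOf (𝓝[≥] 0) (𝓝 0) := by
  set C := ∑' k, 1 / (eigenval k * eigenval k)
  have hbound : Tendsto (fun c : ℝ => 6 * c * C) (𝓝[≥] 0) (𝓝 0) := by
    have : Tendsto (fun c : ℝ => 6 * c * C) (𝓝 0) (𝓝 (6 * 0 * C)) :=
      ((continuous_const.mul continuous_id).mul continuous_const).tendsto 0
    simpa using this.mono_left nhdsWithin_le_nhds
  refine tendsto_of_tendsto_of_tendsto_of_le_of_le' tendsto_const_nhds hbound ?_ ?_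
  · filter_upwards [self_mem_nhdsWithin] with c (hc : 0 ≤ c)
    rcases hc.eq_or_lt with rfl | hc
    · simp [hOf]
    · exact (hOf_pos hc).le
  · filter_upwards [self_mem_nhdsWithin] with c hc using hOf_le_mul hc

lemma not_summable_of_pos_le {ι : Type*} [Infinite ι] {f : ι → ℝ} {ε : ℝ} (hε : 0 < ε)
    (hf : ∀ i, ε ≤ f i) : ¬ Summable f := fun hsum =>
  have ⟨i, hi⟩ := (hsum.tendsto_cofinite_zero.eventually (eventually_lt_nhds hε)).exists
  (hf i).not_gt hi

/-- For every `δ ∈ (0,∞)` and nonzero integer `n`: `n²·𝔥(δ,n) = n² − 3𝔏_δ(n)` (with `𝔏_δ(n)`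
given by its Mittag-Leffler representation), `𝔥(δ,n) ∈ (0,1]`, the series
`Σ_{n ≠ 0} 𝔥(δ,n)²` diverges, and `𝔥(δ,n) → 0` as `δ → 0` for each fixed `n`. -/
theorem stmt4 (δ : ℝ) (hδ : 0 < δ) :
    (∀ n : ℤ, n ≠ 0 →
      (n : ℝ) ^ 2 * hDev δ n =
        (n : ℝ) ^ 2 - 3 * (2 * (n : ℝ) ^ 2 *
          ∑' k : ℕ, 1 / (((k : ℝ) + 1) ^ 2 * π ^ 2 + δ ^ 2 * (n : ℝ) ^ 2))) ∧
    (∀ n : ℤ, n ≠ 0 → hDev δ n ∈ Set.Ioc (0 : ℝ) 1) ∧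
    ¬ Summable (fun n : {m : ℤ // m ≠ 0} => hDev δ (n : ℤ) ^ 2) ∧
    (∀ n : ℤ, n ≠ 0 →
      Tendsto (fun d : ℝ => hDev d n) (nhdsWithin 0 (Set.Ioi 0)) (nhds 0)) := by
  have hpos : ∀ n : ℤ, n ≠ 0 → 0 < δ ^ 2 * (n : ℝ) ^ 2 := fun n hn => by positivity
  refine ⟨fun n _ => ?_, fun n hn => ?_, ?_, fun n _ => ?_⟩
  · rw [hDev_eq_hOf, hOf_eq_one_sub (by positivity)]
    simp only [eigenval]
    ring
  · rw [hDev_eq_hOf]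
    exact ⟨hOf_pos (hpos n hn), hOf_le_one (hpos n hn).le⟩
  · have : Infinite {m : ℤ // m ≠ 0} := (Set.finite_singleton 0).infinite_compl.to_subtype
    refine not_summable_of_pos_le (pow_pos (hOf_pos (hpos 1 one_ne_zero)) 2) fun m => ?_
    have hm : (1 : ℝ) ≤ (m : ℝ) ^ 2 := by
      exact_mod_cast (one_le_sq_iff_one_le_abs _).mpr (Int.one_le_abs m.2)
    rw [hDev_eq_hOf]
    gcongr
    · exact (hOf_pos (hpos 1 one_ne_zero)).le
    · exact hOf_monotoneOn (hpos 1 one_ne_zero).le (hpos m m.2).le (by simp; nlinarith)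
  · simp only [hDev_eq_hOf]
    refine tendsto_hOf_nhdsGE_zero.comp
      (tendsto_nhdsWithin_iff.mpr ⟨?_, Eventually.of_forall fun d => ?_⟩)
    · have : Tendsto (fun d : ℝ => d ^ 2 * (n : ℝ) ^ 2) (𝓝 0) (𝓝 (0 ^ 2 * (n : ℝ) ^ 2)) :=
        ((continuous_pow 2).mul continuous_const).tendsto 0
      simpa using this.mono_left nhdsWithin_le_nhds
    · exact (by positivity : (0 : ℝ) ≤ d ^ 2 * (n : ℝ) ^ 2)
end

section
/- Fix integers n ≥ 2 and 0 ≤ m ≤ n−2 and let ℓ be a nonnegative even integer with ℓ ≤ m. Then the coefficient α_{n,m,ℓ} := Σ over n₁+n₂ = n, 0 ≤ m₁ ≤ n₁−1, 0 ≤ m₂ ≤ n₂−1 with m₁+m₂ = m, and 0 ≤ ℓ₁ ≤ m₁, 0 ≤ ℓ₂ ≤ m₂ with ℓ₁+ℓ₂ = ℓ, of C(n₁−1, m₁)·C(n₂−1, m₂)·C(m₁, ℓ₁)·C(m₂, ℓ₂)·(−1)^{ℓ₂}, equals C(n−1, m+1)·C(m+1, ℓ+1). -/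
open Finset

/-- Dual Vandermonde / hockey-stick convolution:
`∑_{k=0}^{N} C(k,a)·C(N-k,b) = C(N+1, a+b+1)`. -/
private lemma vand_aux (a : ℕ) : ∀ b N : ℕ,
    ∑ k ∈ range (N + 1), k.choose a * (N - k).choose b = (N + 1).choose (a + b + 1) := by
  intro b
  induction b with
  | zero =>
    intro N
    induction N with
    | zero =>
      simp only [Nat.zero_add, sum_range_one, Nat.sub_zero, Nat.choose_zero_right, mul_one,
        Nat.add_zero, zero_add]
      rcases Nat.eq_zero_or_pos a with rfl | ha
      · simp
      · rw [Nat.choose_eq_zero_of_lt (by omega), Nat.choose_eq_zero_of_lt (by omega)]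
    | succ N ih =>
      rw [sum_range_succ]
      simp only [Nat.choose_zero_right, mul_one] at ih ⊢
      rw [ih, Nat.choose_succ_succ (N + 1) a, Nat.add_comm]
  | succ b ih =>
    intro N
    induction N with
    | zero =>
      simp [Nat.choose_eq_zero_of_lt (show 1 < a + (b + 1) + 1 by omega)]
    | succ N ihN =>
      rw [sum_range_succ]
      have h1 : ∀ k ∈ range (N + 1),
          k.choose a * (N + 1 - k).choose (b + 1)
            = k.choose a * (N - k).choose b + k.choose a * (N - k).choose (b + 1) := by
        intro k hk
        simp only [mem_range] at hk
        rw [show N + 1 - k = (N - k) + 1 by omega, Nat.choose_succ_succ, Nat.mul_add]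
      rw [sum_congr rfl h1, sum_add_distrib, ih N, ihN]
      rw [show a + (b + 1) + 1 = (a + b + 1) + 1 by omega]
      rw [Nat.choose_succ_succ (N + 1) (a + b + 1), Nat.sub_self]
      simp [Nat.choose]

/-- The coefficient identity `α_{n,m,ℓ} = C(n−1, m+1)·C(m+1, ℓ+1)`:
for integers `n ≥ 2`, `0 ≤ m ≤ n−2` and a nonnegative even integer `ℓ ≤ m`, the sum over
`n₁ + n₂ = n` (`n₁, n₂ ≥ 1`), `m₁ + m₂ = m` and `ℓ₁ + ℓ₂ = ℓ` of
`C(n₁−1, m₁)·C(n₂−1, m₂)·C(m₁, ℓ₁)·C(m₂, ℓ₂)·(−1)^{ℓ₂}` equals `C(n−1, m+1)·C(m+1, ℓ+1)`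
(the constraints `m₁ ≤ n₁−1`, `m₂ ≤ n₂−1`, `ℓ₁ ≤ m₁`, `ℓ₂ ≤ m₂` are enforced by the
convention `C(a,b) = 0` when `b > a`, built into `Nat.choose`). -/
theorem stmt8 (n m ℓ : ℕ) (hn : 2 ≤ n) (hm : m ≤ n - 2) (hle : Even ℓ) (hlm : ℓ ≤ m) :
    ∑ n₁ ∈ Finset.Ico 1 n, ∑ m₁ ∈ Finset.range (m + 1), ∑ ℓ₁ ∈ Finset.range (ℓ + 1),
        (-1 : ℤ) ^ (ℓ - ℓ₁) * ((n₁ - 1).choose m₁ : ℤ) * ((n - n₁ - 1).choose (m - m₁) : ℤ) *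
          (m₁.choose ℓ₁ : ℤ) * ((m - m₁).choose (ℓ - ℓ₁) : ℤ) =
      ((n - 1).choose (m + 1) : ℤ) * ((m + 1).choose (ℓ + 1) : ℤ) := by
  -- inner sum over n₁
  have inner : ∀ m₁, m₁ ≤ m →
      (∑ n₁ ∈ Ico 1 n, (((n₁ - 1).choose m₁ : ℤ) * ((n - n₁ - 1).choose (m - m₁) : ℤ)))
        = ((n - 1).choose (m + 1) : ℤ) := by
    intro m₁ hm₁
    have h := vand_aux m₁ (m - m₁) (n - 2)
    rw [show m₁ + (m - m₁) + 1 = m + 1 by omega, show n - 2 + 1 = n - 1 by omega] at h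
    calc
      ∑ n₁ ∈ Ico 1 n, (((n₁ - 1).choose m₁ : ℤ) * ((n - n₁ - 1).choose (m - m₁) : ℤ))
        = ∑ k ∈ range (n - 1), ((k.choose m₁ : ℤ) * ((n - 2 - k).choose (m - m₁) : ℤ)) := by
          rw [Finset.sum_Ico_eq_sum_range]
          refine sum_congr rfl fun k hk => ?_
          rw [show 1 + k - 1 = k by omega, show n - (1 + k) - 1 = n - 2 - k by omega]
      _ = _ := by exact_mod_cast congrArg (Nat.cast : ℕ → ℤ) h
  have hsign : (∑ ℓ₁ ∈ range (ℓ + 1), ((-1 : ℤ)) ^ (ℓ - ℓ₁)) = 1 := by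
    rw [← Finset.sum_range_reflect]
    have : ∀ j ∈ range (ℓ + 1), ((-1 : ℤ)) ^ (ℓ - (ℓ + 1 - 1 - j)) = (-1 : ℤ) ^ j := by
      intro j hj
      simp only [mem_range] at hj
      congr 1
      omega
    rw [sum_congr rfl this, neg_one_geom_sum, if_neg (by simpa [Nat.even_add_one] using hle)]
  rw [Finset.sum_comm]
  calc
    ∑ m₁ ∈ range (m + 1), ∑ n₁ ∈ Ico 1 n, ∑ ℓ₁ ∈ range (ℓ + 1),
        (-1 : ℤ) ^ (ℓ - ℓ₁) * ((n₁ - 1).choose m₁ : ℤ) * ((n - n₁ - 1).choose (m - m₁) : ℤ) *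
          (m₁.choose ℓ₁ : ℤ) * ((m - m₁).choose (ℓ - ℓ₁) : ℤ)
      = ∑ m₁ ∈ range (m + 1), ∑ ℓ₁ ∈ range (ℓ + 1),
          (-1 : ℤ) ^ (ℓ - ℓ₁) * (m₁.choose ℓ₁ : ℤ) * ((m - m₁).choose (ℓ - ℓ₁) : ℤ) *
            ((n - 1).choose (m + 1) : ℤ) := by
        refine sum_congr rfl fun m₁ hm₁ => ?_
        rw [Finset.sum_comm]
        refine sum_congr rfl fun ℓ₁ hℓ₁ => ?_
        simp only [mem_range] at hm₁
        rw [show ((-1 : ℤ) ^ (ℓ - ℓ₁) * (m₁.choose ℓ₁ : ℤ) * ((m - m₁).choose (ℓ - ℓ₁) : ℤ) *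
            ((n - 1).choose (m + 1) : ℤ))
          = ((-1 : ℤ) ^ (ℓ - ℓ₁) * (m₁.choose ℓ₁ : ℤ) * ((m - m₁).choose (ℓ - ℓ₁) : ℤ)) *
            (∑ n₁ ∈ Ico 1 n, (((n₁ - 1).choose m₁ : ℤ) * ((n - n₁ - 1).choose (m - m₁) : ℤ)))
            from by rw [inner m₁ (by omega)], Finset.mul_sum]
        exact sum_congr rfl fun n₁ _ => by ring
    _ = ∑ ℓ₁ ∈ range (ℓ + 1),
          (-1 : ℤ) ^ (ℓ - ℓ₁) * (((m + 1).choose (ℓ + 1) : ℤ) * ((n - 1).choose (m + 1) : ℤ)) := by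
        rw [Finset.sum_comm]
        refine sum_congr rfl fun ℓ₁ hℓ₁ => ?_
        simp only [mem_range] at hℓ₁
        have h := vand_aux ℓ₁ (ℓ - ℓ₁) m
        rw [show ℓ₁ + (ℓ - ℓ₁) + 1 = ℓ + 1 by omega] at h
        calc
          ∑ m₁ ∈ range (m + 1),
              (-1 : ℤ) ^ (ℓ - ℓ₁) * (m₁.choose ℓ₁ : ℤ) * ((m - m₁).choose (ℓ - ℓ₁) : ℤ) *
                ((n - 1).choose (m + 1) : ℤ)
            = (-1 : ℤ) ^ (ℓ - ℓ₁) *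
                ((∑ m₁ ∈ range (m + 1), ((m₁.choose ℓ₁ : ℤ) * ((m - m₁).choose (ℓ - ℓ₁) : ℤ))) *
                  ((n - 1).choose (m + 1) : ℤ)) := by
              rw [Finset.sum_mul, Finset.mul_sum]
              exact sum_congr rfl fun m₁ _ => by ring
          _ = _ := by
              rw [show (∑ m₁ ∈ range (m + 1), ((m₁.choose ℓ₁ : ℤ) * ((m - m₁).choose (ℓ - ℓ₁) : ℤ)))
                = ((m + 1).choose (ℓ + 1) : ℤ) from by exact_mod_cast congrArg (Nat.cast : ℕ → ℤ) h]
    _ = ((n - 1).choose (m + 1) : ℤ) * ((m + 1).choose (ℓ + 1) : ℤ) := by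
        rw [← Finset.sum_mul, hsign]
        ring
end

section
/- Fix an integer n ≥ 1 and an integer ℓ with 0 ≤ ℓ ≤ n−1 and ℓ ≡ n−1 (mod 2). Then Σ over n₁+n₂ = n−1 (n₁,n₂ ≥ 0), 0 ≤ m₁ ≤ n₁, 0 ≤ m₂ ≤ n₂ with m₁+m₂ = ℓ, of C(n₁, m₁)·C(n₂, m₂)·(−1)^{n₁+m₁}, equals C(n, ℓ). -/
/-!
With `N = n - 1`, the double sum is the coefficient of `X^ℓ` in
`∑ k ≤ N, (X - 1)^k (X + 1)^(N - k)`, a two-variable geometric sum whose product with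
`(X + 1) - (X - 1) = 2` is `(X + 1)^n - (X - 1)^n`. The parity condition makes the `X^ℓ`
coefficient of `(X - 1)^n` equal to `-C(n, ℓ)`, so twice the sum is `2 C(n, ℓ)`.
-/

open Finset

namespace Polynomial

variable {R : Type*}

theorem coeff_X_sub_one_pow [Ring R] (k m : ℕ) :
    ((X - 1 : R[X]) ^ k).coeff m = (-1) ^ (k + m) * k.choose m := by
  rw [sub_eq_add_neg, ← C_1, ← C_neg, coeff_X_add_C_pow]
  rcases le_or_gt m k with hmk | hkm
  · rw [show k + m = (k - m) + 2 * m by omega, pow_add, pow_mul]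
    simp
  · simp [Nat.choose_eq_zero_of_lt hkm]

theorem coeff_X_sub_one_pow_mul_X_add_one_pow [Ring R] (k j ℓ : ℕ) :
    ((X - 1 : R[X]) ^ k * (X + 1) ^ j).coeff ℓ =
      ∑ m ∈ range (ℓ + 1), (-1 : R) ^ (k + m) * k.choose m * j.choose (ℓ - m) := by
  simp only [coeff_mul, Nat.sum_antidiagonal_eq_sum_range_succ_mk, coeff_X_sub_one_pow,
    coeff_X_add_one_pow]

theorem geom_sum₂_X_sub_one_X_add_one [CommRing R] (N : ℕ) :
    2 * ∑ k ∈ range (N + 1), (X - 1 : R[X]) ^ k * (X + 1) ^ (N - k) =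
      (X + 1) ^ (N + 1) - (X - 1) ^ (N + 1) := by
  have h := geom_sum₂_mul (X - 1 : R[X]) (X + 1) (N + 1)
  simp only [Nat.add_sub_cancel] at h
  linear_combination -h

end Polynomial

open Polynomial

theorem two_mul_sum_sum_neg_one_pow_mul_choose_mul_choose (N ℓ : ℕ) :
    2 * ∑ k ∈ range (N + 1), ∑ m ∈ range (ℓ + 1),
        (-1 : ℤ) ^ (k + m) * k.choose m * (N - k).choose (ℓ - m) =
      (1 - (-1) ^ (N + 1 + ℓ)) * (N + 1).choose ℓ := by
  have h := congrArg (coeff · ℓ) (geom_sum₂_X_sub_one_X_add_one (R := ℤ) N)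
  simp only [coeff_ofNat_mul, finsetSum_coeff, coeff_X_sub_one_pow_mul_X_add_one_pow,
    coeff_sub, coeff_X_add_one_pow, coeff_X_sub_one_pow] at h
  rw [h]
  ring

theorem stmt9_general (n ℓ : ℕ) (hn : 1 ≤ n) (hpar : ℓ % 2 = (n - 1) % 2) :
    ∑ n₁ ∈ Finset.range n, ∑ m₁ ∈ Finset.range (ℓ + 1),
        (-1 : ℤ) ^ (n₁ + m₁) * (n₁.choose m₁ : ℤ) * ((n - 1 - n₁).choose (ℓ - m₁) : ℤ) =
      (n.choose ℓ : ℤ) := by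
  obtain ⟨N, rfl⟩ := Nat.exists_eq_add_of_le' hn
  have hsign : (-1 : ℤ) ^ (N + 1 + ℓ) = -1 := Odd.neg_one_pow (Nat.odd_iff.2 (by omega))
  have h := two_mul_sum_sum_neg_one_pow_mul_choose_mul_choose N ℓ
  rw [hsign] at h
  simp only [Nat.add_sub_cancel]
  linarith

/-- For integers `n ≥ 1` and `0 ≤ ℓ ≤ n−1` with `ℓ ≡ n−1 (mod 2)`, the sum over
`n₁ + n₂ = n−1` (`n₁, n₂ ≥ 0`) and `m₁ + m₂ = ℓ` of `C(n₁, m₁)·C(n₂, m₂)·(−1)^{n₁+m₁}`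
equals `C(n, ℓ)` (the constraints `m₁ ≤ n₁`, `m₂ ≤ n₂` are enforced by the convention
`C(a,b) = 0` for `b > a`, built into `Nat.choose`). -/
theorem stmt9 (n ℓ : ℕ) (hn : 1 ≤ n) (hℓ : ℓ ≤ n - 1) (hpar : ℓ % 2 = (n - 1) % 2) :
    ∑ n₁ ∈ Finset.range n, ∑ m₁ ∈ Finset.range (ℓ + 1),
        (-1 : ℤ) ^ (n₁ + m₁) * (n₁.choose m₁ : ℤ) * ((n - 1 - n₁).choose (ℓ - m₁) : ℤ) =
      (n.choose ℓ : ℤ) :=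
  stmt9_general n ℓ hn hpar
end

section
/- Define the KdV microscopic conservation laws by h₀ = −v, h₁ = −∂ₓv, and hₙ = Σ_{n₁+n₂=n−2} h_{n₁}h_{n₂} + ∂ₓh_{n−1} for n ≥ 2, where v is a smooth function on the torus. Then for every n ≥ 0, the odd-order quantity h_{2n+1} is a total derivative: h_{2n+1} = ∂ₓ( Σ_{j=1}^{n+1} (2^{j−1}/j) Σ_{m₁+⋯+m_j = n+1−j} h_{2m₁}⋯h_{2m_j} ), where the inner sum is over nonnegative integers m₁,…,m_j. In particular ∫_𝕋 h_{2n+1} dx = 0. -/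
open Real Finset


namespace Stmt12Aux

/-- swap order of summation over a triangle -/
lemma sum_simplex (N : ℕ) (g : ℕ → ℕ → ℝ) :
    ∑ a ∈ range N, ∑ b ∈ range (N - a), g a b
      = ∑ b ∈ range N, ∑ a ∈ range (N - b), g a b := by
  have key : ∀ (g : ℕ → ℕ → ℝ),
      ∑ a ∈ range N, ∑ b ∈ range (N - a), g a b
        = ∑ a ∈ range N, ∑ b ∈ range N, if a + b < N then g a b else 0 := by
    intro g
    refine Finset.sum_congr rfl fun a _ => ?_
    rw [← Finset.sum_filter]
    apply Finset.sum_congr _ (fun _ _ => rfl)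
    ext b
    simp only [Finset.mem_range, Finset.mem_filter]
    omega
  rw [key g, key (fun b a => g a b), Finset.sum_comm]
  refine Finset.sum_congr rfl fun b _ => Finset.sum_congr rfl fun a _ => ?_
  simp only [Nat.add_comm a b]

lemma sum_range_even_odd (f : ℕ → ℝ) : ∀ N, ∑ p ∈ range (2 * N), f p
    = ∑ a ∈ range N, f (2 * a) + ∑ a ∈ range N, f (2 * a + 1)
  | 0 => by simp
  | N + 1 => by
    have e : 2 * (N + 1) = (2 * N + 1) + 1 := by ring
    rw [e, Finset.sum_range_succ, Finset.sum_range_succ, sum_range_even_odd f N,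
      Finset.sum_range_succ, Finset.sum_range_succ]
    ring

lemma sum_adt_succ {j s : ℕ} (f : (Fin (j + 1) → ℕ) → ℝ) :
    ∑ m ∈ Finset.Nat.antidiagonalTuple (j + 1) s, f m
      = ∑ a ∈ range (s + 1), ∑ m ∈ Finset.Nat.antidiagonalTuple j (s - a), f (Fin.cons a m) := by
  rw [Finset.sum_sigma']
  refine Finset.sum_nbij' (fun m => ⟨m 0, Fin.tail m⟩) (fun p => Fin.cons p.1 p.2)
    ?_ ?_ ?_ ?_ ?_
  · intro m hm
    rw [Finset.Nat.mem_antidiagonalTuple] at hm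
    rw [Fin.sum_univ_succ] at hm
    simp only [Finset.mem_sigma, Finset.mem_range, Finset.Nat.mem_antidiagonalTuple]
    constructor
    · omega
    · show ∑ i : Fin j, m (Fin.succ i) = s - m 0
      omega
  · rintro ⟨a, m⟩ hp
    simp only [Finset.mem_sigma, Finset.mem_range, Finset.Nat.mem_antidiagonalTuple] at hp
    rw [Finset.Nat.mem_antidiagonalTuple, Fin.sum_univ_succ]
    simp only [Fin.cons_zero, Fin.cons_succ]
    omega
  · intro m _
    exact Fin.cons_self_tail m
  · rintro ⟨a, m⟩ _
    simp [Fin.tail_cons]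
  · intro m _
    rw [Fin.cons_self_tail m]


noncomputable def Pp (h : ℕ → ℝ → ℝ) (j s : ℕ) (x : ℝ) : ℝ :=
  ∑ m ∈ Finset.Nat.antidiagonalTuple j s, ∏ i, h (2 * m i) x

lemma Pp_zero (h : ℕ → ℝ → ℝ) (s : ℕ) (x : ℝ) :
    Pp h 0 s x = if s = 0 then 1 else 0 := by
  cases s with
  | zero => simp [Pp, Finset.Nat.antidiagonalTuple_zero_zero]
  | succ s => simp [Pp, Finset.Nat.antidiagonalTuple_zero_succ]

lemma Pp_succ (h : ℕ → ℝ → ℝ) (j s : ℕ) (x : ℝ) :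
    Pp h (j + 1) s x = ∑ a ∈ range (s + 1), h (2 * a) x * Pp h j (s - a) x := by
  rw [Pp, sum_adt_succ]
  refine Finset.sum_congr rfl fun a _ => ?_
  rw [Pp, Finset.mul_sum]
  refine Finset.sum_congr rfl fun m _ => ?_
  rw [Fin.prod_univ_succ]
  simp [Fin.cons_zero, Fin.cons_succ]

lemma prod_erase_zero {j : ℕ} (g : Fin (j + 1) → ℝ) :
    ∏ k ∈ (univ : Finset (Fin (j + 1))).erase 0, g k = ∏ i : Fin j, g i.succ := by
  rw [Fin.univ_succ, Finset.erase_cons, Finset.prod_map]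
  rfl

noncomputable def Ff (h : ℕ → ℝ → ℝ) (n : ℕ) (x : ℝ) : ℝ :=
  ∑ j ∈ Finset.Icc 1 (n + 1), ((2 : ℝ) ^ (j - 1) / (j : ℝ))
    * Pp h j (n + 1 - j) x

noncomputable def Dd (h : ℕ → ℝ → ℝ) (n : ℕ) (x : ℝ) : ℝ :=
  ∑ j ∈ range (n + 1), (2:ℝ) ^ j
    * ∑ a ∈ range (n - j + 1), deriv (h (2 * a)) x * Pp h j (n - j - a) x

lemma contDiff_deriv {f : ℝ → ℝ} (hf : ContDiff ℝ (⊤ : ℕ∞) f) : ContDiff ℝ (⊤ : ℕ∞) (deriv f) := by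
  exact (contDiff_infty_iff_deriv.mp hf).2

lemma periodic_deriv {f : ℝ → ℝ} {c : ℝ} (hf : Function.Periodic f c) :
    Function.Periodic (deriv f) c := by
  intro x
  rw [← deriv_comp_add_const f c, hf.funext]

section

variable {h : ℕ → ℝ → ℝ} (hsm : ∀ k, ContDiff ℝ (⊤ : ℕ∞) (h k))

include hsm

lemma Pp_contDiff (j s : ℕ) : ContDiff ℝ (⊤ : ℕ∞) (fun x => Pp h j s x) :=
  ContDiff.sum fun m _ => contDiff_prod fun i _ => hsm (2 * m i)

lemma deriv_Pp (j s : ℕ) (x : ℝ) :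
    deriv (fun y => Pp h (j + 1) s y) x
      = ((j : ℝ) + 1) * ∑ a ∈ range (s + 1), deriv (h (2 * a)) x * Pp h j (s - a) x := by
  have hdh : ∀ k, Differentiable ℝ (h k) := fun k => (hsm k).differentiable (by simp)
  have step1 : deriv (fun y => Pp h (j + 1) s y) x
      = ∑ m ∈ Finset.Nat.antidiagonalTuple (j + 1) s,
          ∑ i : Fin (j + 1), (∏ k ∈ (univ : Finset (Fin (j+1))).erase i, h (2 * m k) x)
            * deriv (h (2 * m i)) x := by
    rw [show (fun y => Pp h (j + 1) s y)
        = fun y => ∑ m ∈ Finset.Nat.antidiagonalTuple (j + 1) s, ∏ i, h (2 * m i) y from rfl]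
    rw [deriv_fun_sum fun m _ => ((contDiff_prod fun i _ => hsm (2 * m i)).differentiable
      (by simp)).differentiableAt]
    refine Finset.sum_congr rfl fun m _ => ?_
    rw [deriv_fun_finsetProd fun i _ => (hdh (2 * m i)).differentiableAt]
    simp [smul_eq_mul]
  rw [step1, Finset.sum_comm]
  have Tswap : ∀ i : Fin (j + 1),
      (∑ m ∈ Finset.Nat.antidiagonalTuple (j + 1) s,
        (∏ k ∈ (univ : Finset (Fin (j+1))).erase i, h (2 * m k) x) * deriv (h (2 * m i)) x)
      = ∑ m ∈ Finset.Nat.antidiagonalTuple (j + 1) s,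
        (∏ k ∈ (univ : Finset (Fin (j+1))).erase 0, h (2 * m k) x) * deriv (h (2 * m 0)) x := by
    intro i
    refine Finset.sum_nbij' (fun m => m ∘ Equiv.swap 0 i) (fun m => m ∘ Equiv.swap 0 i)
      ?_ ?_ ?_ ?_ ?_
    · intro m hm
      rw [Finset.Nat.mem_antidiagonalTuple] at hm ⊢
      rw [← hm]
      exact Equiv.sum_comp (Equiv.swap 0 i) m
    · intro m hm
      rw [Finset.Nat.mem_antidiagonalTuple] at hm ⊢
      rw [← hm]
      exact Equiv.sum_comp (Equiv.swap 0 i) m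
    · intro m _
      funext k
      simp [Equiv.swap_apply_self]
    · intro m _
      funext k
      simp [Equiv.swap_apply_self]
    · intro m _
      have h2 : (m ∘ Equiv.swap 0 i) 0 = m i := by simp
      rw [h2]
      congr 1
      refine Finset.prod_nbij' (fun k => Equiv.swap 0 i k) (fun k => Equiv.swap 0 i k)
        ?_ ?_ ?_ ?_ ?_
      · intro k hk
        simp only [Finset.mem_erase, Finset.mem_univ, and_true] at hk ⊢
        intro hc
        have h3 := congrArg (Equiv.swap 0 i) hc
        simp only [Equiv.swap_apply_self, Equiv.swap_apply_left,
          Equiv.swap_apply_right] at h3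
        exact hk h3
      · intro k hk
        simp only [Finset.mem_erase, Finset.mem_univ, and_true] at hk ⊢
        intro hc
        have h3 := congrArg (Equiv.swap 0 i) hc
        simp only [Equiv.swap_apply_self, Equiv.swap_apply_left,
          Equiv.swap_apply_right] at h3
        exact hk h3
      · intro k _; simp
      · intro k _; simp
      · intro k _
        simp [Equiv.swap_apply_self]
  rw [Finset.sum_congr rfl (fun i _ => Tswap i), Finset.sum_const, Finset.card_univ,
    Fintype.card_fin, nsmul_eq_mul]
  push_cast
  congr 1
  rw [sum_adt_succ]
  refine Finset.sum_congr rfl fun a _ => ?_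
  rw [Pp, Finset.mul_sum]
  refine Finset.sum_congr rfl fun m _ => ?_
  rw [prod_erase_zero]
  simp only [Fin.cons_zero, Fin.cons_succ]
  ring

lemma Ff_deriv (n : ℕ) (x : ℝ) :
    deriv (fun y => Ff h n y) x = Dd h n x := by
  have step1 : deriv (fun y => Ff h n y) x
      = ∑ j ∈ Finset.Icc 1 (n + 1), ((2:ℝ) ^ (j - 1) / (j : ℝ))
          * deriv (fun y => Pp h j (n + 1 - j) y) x := by
    rw [show (fun y => Ff h n y) = fun y => ∑ j ∈ Finset.Icc 1 (n + 1),
      ((2:ℝ) ^ (j - 1) / (j : ℝ)) * Pp h j (n + 1 - j) y from rfl]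
    rw [deriv_fun_sum fun j _ => (((Pp_contDiff hsm j (n+1-j)).differentiable
      (by simp)).differentiableAt).const_mul _]
    refine Finset.sum_congr rfl fun j _ => ?_
    rw [deriv_const_mul _ ((Pp_contDiff hsm j (n+1-j)).differentiable (by simp)).differentiableAt]
  rw [step1, ← Finset.Ico_add_one_right_eq_Icc, Finset.sum_Ico_eq_sum_range]
  have e1 : n + 1 + 1 - 1 = n + 1 := by omega
  rw [e1, Dd]
  refine Finset.sum_congr rfl fun j hj => ?_
  rw [Finset.mem_range] at hj
  have e2 : 1 + j = j + 1 := by omega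
  have e3 : n + 1 - (j + 1) = n - j := by omega
  rw [e2, e3, deriv_Pp hsm j (n - j) x]
  have e4 : (j + 1 : ℕ) - 1 = j := by omega
  rw [e4]
  have hne : ((j : ℝ) + 1) ≠ 0 := by positivity
  push_cast
  field_simp

omit hsm in
lemma Dd_rec (n : ℕ) (x : ℝ) :
    Dd h n x = deriv (h (2 * n)) x + 2 * ∑ c ∈ range n, h (2 * c) x * Dd h (n - 1 - c) x := by
  rw [Dd, Finset.sum_range_succ']
  have hA0 : ((2:ℝ) ^ (0:ℕ) * ∑ a ∈ range (n - 0 + 1), deriv (h (2 * a)) x * Pp h 0 (n - 0 - a) x)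
      = deriv (h (2 * n)) x := by
    rw [pow_zero, one_mul, Nat.sub_zero]
    rw [Finset.sum_eq_single_of_mem n (self_mem_range_succ n)]
    · rw [Pp_zero]
      simp
    · intro a ha hne
      rw [Finset.mem_range] at ha
      rw [Pp_zero]
      have : ¬ (n - a = 0) := by omega
      simp [this]
  rw [hA0, add_comm]
  congr 1
  -- remaining: ∑_{j∈range n} A (j+1) = 2 * ∑_c h(2c) Dd (n-1-c)
  have lhs_eq : (∑ j ∈ range n, (2:ℝ) ^ (j+1)
        * ∑ a ∈ range (n - (j+1) + 1), deriv (h (2 * a)) x * Pp h (j+1) (n - (j+1) - a) x)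
      = 2 * ∑ j ∈ range n, ∑ a ∈ range (n - j), ∑ c ∈ range (n - j - a),
          (2:ℝ)^j * (deriv (h (2*a)) x * (h (2*c) x * Pp h j (n-1-j-a-c) x)) := by
    rw [Finset.mul_sum]
    refine Finset.sum_congr rfl fun j hj => ?_
    rw [Finset.mem_range] at hj
    have e5 : n - (j+1) + 1 = n - j := by omega
    rw [e5, Finset.mul_sum, Finset.mul_sum]
    refine Finset.sum_congr rfl fun a ha => ?_
    rw [Finset.mem_range] at ha
    have e6 : n - (j+1) - a = n - 1 - j - a := by omega
    rw [e6, Pp_succ]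
    have e7 : n - 1 - j - a + 1 = n - j - a := by omega
    rw [e7, Finset.mul_sum, Finset.mul_sum, Finset.mul_sum]
    refine Finset.sum_congr rfl fun c hc => ?_
    have e8 : n - 1 - j - a - c = n - 1 - j - a - c := rfl
    ring
  rw [lhs_eq]
  congr 1
  -- reorder the triple sum
  have swap1 : (∑ j ∈ range n, ∑ a ∈ range (n - j), ∑ c ∈ range (n - j - a),
        (2:ℝ)^j * (deriv (h (2*a)) x * (h (2*c) x * Pp h j (n-1-j-a-c) x)))
      = ∑ j ∈ range n, ∑ c ∈ range (n - j), ∑ a ∈ range (n - j - c),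
        (2:ℝ)^j * (deriv (h (2*a)) x * (h (2*c) x * Pp h j (n-1-j-a-c) x)) := by
    refine Finset.sum_congr rfl fun j hj => ?_
    exact sum_simplex (n - j) fun a c => (2:ℝ)^j
      * (deriv (h (2*a)) x * (h (2*c) x * Pp h j (n-1-j-a-c) x))
  rw [swap1]
  rw [sum_simplex n fun j c => ∑ a ∈ range (n - j - c),
      (2:ℝ)^j * (deriv (h (2*a)) x * (h (2*c) x * Pp h j (n-1-j-a-c) x))]
  refine Finset.sum_congr rfl fun c hc => ?_
  rw [Finset.mem_range] at hc
  rw [Dd, Finset.mul_sum]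
  have e9 : n - 1 - c + 1 = n - c := by omega
  rw [e9]
  refine Finset.sum_congr rfl fun j hj => ?_
  rw [Finset.mem_range] at hj
  have e10 : n - 1 - c - j + 1 = n - j - c := by omega
  rw [e10, Finset.mul_sum, Finset.mul_sum]
  refine Finset.sum_congr rfl fun a ha => ?_
  have e11 : n - 1 - c - j - a = n - 1 - j - a - c := by omega
  rw [e11]
  ring

end

end Stmt12Aux


open Stmt12Aux

/-- KdV microscopic conservation laws: given a smooth `2π`-periodic `v`, let `h₀ = −v`,
`h₁ = −∂ₓv`, and `hₙ = Σ_{n₁+n₂=n−2} h_{n₁}h_{n₂} + ∂ₓh_{n−1}` for `n ≥ 2`.  Then each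
odd-order `h_{2n+1}` is the total derivative
`∂ₓ( Σ_{j=1}^{n+1} (2^{j−1}/j) Σ_{m₁+⋯+m_j = n+1−j} h_{2m₁}⋯h_{2m_j} )`;
in particular `∫_𝕋 h_{2n+1} dx = 0`. -/
theorem stmt12 (v : ℝ → ℝ) (hv : ContDiff ℝ (⊤ : ℕ∞) v) (hvp : Function.Periodic v (2 * π))
    (h : ℕ → ℝ → ℝ)
    (h0 : h 0 = fun x => -v x)
    (h1 : h 1 = fun x => -deriv v x)
    (hrec : ∀ n, 2 ≤ n → h n = fun x =>
      (∑ p ∈ Finset.range (n - 1), h p x * h (n - 2 - p) x) + deriv (h (n - 1)) x)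
    (n : ℕ) :
    h (2 * n + 1) =
      deriv (fun x => ∑ j ∈ Finset.Icc 1 (n + 1), ((2 : ℝ) ^ (j - 1) / (j : ℝ)) *
        ∑ m ∈ Finset.Nat.antidiagonalTuple j (n + 1 - j), ∏ i, h (2 * m i) x) ∧
    ∫ x in (0 : ℝ)..(2 * π), h (2 * n + 1) x = 0 := by
  -- smoothness of all h k
  have hsm : ∀ k, ContDiff ℝ (⊤ : ℕ∞) (h k) := by
    intro k
    induction k using Nat.strong_induction_on with
    | _ k ih =>
      match k with
      | 0 => rw [h0]; exact hv.neg
      | 1 => rw [h1]; exact (contDiff_deriv hv).neg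
      | (k+2) =>
        rw [hrec (k+2) (by omega)]
        refine ContDiff.add (ContDiff.sum fun p hp => ?_) (contDiff_deriv (ih _ (by omega)))
        rw [Finset.mem_range] at hp
        exact (ih p (by omega)).mul (ih (k + 2 - 2 - p) (by omega))
  -- periodicity of all h k
  have hper : ∀ k, Function.Periodic (h k) (2 * π) := by
    intro k
    induction k using Nat.strong_induction_on with
    | _ k ih =>
      match k with
      | 0 => rw [h0]; intro x; simp [hvp x]
      | 1 => rw [h1]; intro x; simp [(periodic_deriv hvp) x]
      | (k+2) =>
        rw [hrec (k+2) (by omega)]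
        intro x
        simp only
        rw [periodic_deriv (ih (k + 2 - 1) (by omega)) x]
        congr 1
        refine Finset.sum_congr rfl fun p hp => ?_
        rw [Finset.mem_range] at hp
        rw [ih p (by omega) x, ih (k + 2 - 2 - p) (by omega) x]
  -- the basic odd recursion
  have hodd : ∀ N x, h (2*N+1) x = deriv (h (2*N)) x
      + 2 * ∑ c ∈ Finset.range N, h (2*c) x * h (2*(N-1-c)+1) x := by
    intro N x
    cases N with
    | zero =>
      norm_num
      rw [h0, h1]
      simp [deriv.neg]
    | succ M =>
      rw [hrec (2*(M+1)+1) (by omega)]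
      simp only
      have e1 : 2*(M+1)+1-1 = 2*(M+1) := by omega
      have e2 : 2*(M+1)+1-2 = 2*M+1 := by omega
      rw [e1, e2]
      rw [sum_range_even_odd (fun p => h p x * h (2*M+1-p) x) (M+1)]
      have S1 : (∑ a ∈ Finset.range (M+1), h (2*a) x * h (2*M+1-2*a) x)
          = ∑ c ∈ Finset.range (M+1), h (2*c) x * h (2*((M+1)-1-c)+1) x := by
        refine Finset.sum_congr rfl fun a ha => ?_
        rw [Finset.mem_range] at ha
        have : 2*M+1-2*a = 2*((M+1)-1-a)+1 := by omega
        rw [this]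
      have S2 : (∑ a ∈ Finset.range (M+1), h (2*a+1) x * h (2*M+1-(2*a+1)) x)
          = ∑ c ∈ Finset.range (M+1), h (2*c) x * h (2*((M+1)-1-c)+1) x := by
        rw [← Finset.sum_range_reflect
          (fun a => h (2*a) x * h (2*((M+1)-1-a)+1) x) (M+1)]
        refine Finset.sum_congr rfl fun a ha => ?_
        rw [Finset.mem_range] at ha
        have e3 : 2*M+1-(2*a+1) = 2*((M+1)-1-a) := by omega
        have e4 : 2*((M+1)-1-((M+1)-1-a))+1 = 2*a+1 := by omega
        rw [e3, e4]
        ring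
      rw [S1, S2]
      ring
  -- main identity: h (2N+1) = Dd h N pointwise
  have main : ∀ N x, h (2*N+1) x = Dd h N x := by
    intro N
    induction N using Nat.strong_induction_on with
    | _ N ih =>
      intro x
      rw [hodd N x, Dd_rec N x]
      congr 1
      rw [mul_comm, mul_comm (2:ℝ)]
      congr 1
      refine Finset.sum_congr rfl fun c hc => ?_
      rw [Finset.mem_range] at hc
      rw [ih (N-1-c) (by omega) x]
  have key1 : h (2*n+1) = deriv (fun y => Ff h n y) := by
    funext x
    rw [Ff_deriv hsm n x]
    exact main n x
  constructor
  · exact key1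
  · rw [show (fun x => h (2 * n + 1) x) = h (2*n+1) from rfl]
    have hFsm : ContDiff ℝ (⊤ : ℕ∞) (fun y => Ff h n y) :=
      ContDiff.sum fun j _ => contDiff_const.mul (Pp_contDiff hsm j (n + 1 - j))
    have hint : ∫ x in (0:ℝ)..(2*π), deriv (fun y => Ff h n y) x
        = Ff h n (2*π) - Ff h n 0 := by
      apply intervalIntegral.integral_deriv_eq_sub
      · intro y _
        exact (hFsm.differentiable (by simp)).differentiableAt
      · exact ((contDiff_deriv hFsm).continuous).intervalIntegrable _ _
    have Ffper : Ff h n (2*π) = Ff h n 0 := by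
      have h2 : Ff h n (0 + 2*π) = Ff h n 0 := by
        unfold Ff Pp
        refine Finset.sum_congr rfl fun j _ => ?_
        congr 1
        refine Finset.sum_congr rfl fun m _ => ?_
        exact Finset.prod_congr rfl fun i _ => hper (2 * m i) 0
      rwa [zero_add] at h2
    rw [key1]
    rw [hint, Ffper, sub_self]
end
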